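/- The following identity of formal power series in q holds: ∑_{n ≥ 0} b₂(n)·qⁿ = (q²/(1−q)) · ∏_{k=2}^{∞}(1 + q^k). -/

import Mathlib

/-!
In a partition into distinct parts the cells of hook length two are the last cells of the rows
of length `p ≥ 2` for which `p - 1` is not a part (arm one, leg zero; arm zero and leg one would
need a repeated part). Hence, for any `N ≥ n`, `b₂(n)` counts the pairs `(A, p)` where
`A ⊆ {1, …, N}` has sum `n`, `p ∈ A`, `p ≥ 2` and `p - 1 ∉ A`. Adjoining the element `N + 1` to
such sets shows that their weighted count `F_N = ∑_A #{such p} x^{∑ A}` satisfies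
`F_{N+1} = (1 + x^{N+1}) F_N + x^{N+1} ∏_{k=1}^{N-1} (1 + x^k)`, which is solved by
`F_N = x² (1 + x + ⋯ + x^{N-2}) ∏_{k=2}^{N-1} (1 + x^k)`; the coefficients of `F_N` stabilise
to those of the claimed series.
-/

/-- `λ'_j`: the number of parts of `π` that are at least `j` (the conjugate partition). -/
def conjPart (π : Multiset ℕ) (j : ℕ) : ℕ := (π.filter (fun p => j ≤ p)).card

/-- `λ_i`: the `i`-th largest part of `π` (1-indexed). -/
def rowPart (π : Multiset ℕ) (i : ℕ) : ℕ :=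
  ((Finset.Icc 1 π.sum).filter (fun j => i ≤ conjPart π j)).card

/-- The number of cells of hook length `t` in the Young diagram of `π`:
cells `(i,j)` with `1 ≤ i`, `1 ≤ j ≤ λ_i` and `λ_i + λ'_j − i − j + 1 = t`. -/
def hookCount (π : Multiset ℕ) (t : ℕ) : ℕ :=
  (((Finset.Icc 1 π.sum) ×ˢ (Finset.Icc 1 π.sum)).filter
    (fun c => c.2 ≤ rowPart π c.1 ∧ rowPart π c.1 + conjPart π c.2 + 1 = t + c.1 + c.2)).card

/-- `b₂(n)`: the total number of cells of hook length 2 summed over all partitions of `n`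
into distinct parts. -/
def b2 (n : ℕ) : ℕ :=
  ∑ π ∈ Nat.Partition.distincts n, hookCount π.parts 2

/-- The infinite product `∏_{k=a}^{∞}(1 + q^k)`, defined coefficientwise: the `n`-th
coefficient of the partial product `∏_{k=a}^{a+n}(1 + q^k)` is already stable. -/
noncomputable def prodOnePlusFrom (a : ℕ) : PowerSeries ℚ :=
  PowerSeries.mk fun n =>
    PowerSeries.coeff n
      (∏ k ∈ Finset.Icc a (a + n), (1 + (PowerSeries.X : PowerSeries ℚ) ^ k))

open Finset

lemma conjPart_antitone (m : Multiset ℕ) : Antitone (conjPart m) := fun _ _ h =>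
  Multiset.card_le_card (Multiset.monotone_filter_right m fun _ hx => h.trans hx)

lemma conjPart_eq_conjPart_succ_add_count (m : Multiset ℕ) (j : ℕ) :
    conjPart m j = conjPart m (j + 1) + m.count j := by
  have hdisj : m.filter (fun p => j + 1 ≤ p ∧ j = p) = 0 :=
    Multiset.filter_eq_nil.mpr fun _ _ => by omega
  rw [conjPart, conjPart, Multiset.count_eq_card_filter_eq, ← Multiset.card_add,
    Multiset.filter_add_filter, hdisj, add_zero]
  exact congrArg _ (Multiset.filter_congr fun _ _ => by omega)

lemma conjPart_mul_le_sum (m : Multiset ℕ) (j : ℕ) : conjPart m j * j ≤ m.sum :=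
  calc conjPart m j * j ≤ (m.filter (j ≤ ·)).sum := by
        rw [conjPart, ← smul_eq_mul]
        exact Multiset.card_nsmul_le_sum fun _ hx => (Multiset.mem_filter.mp hx).2
    _ ≤ (m.filter (j ≤ ·)).sum + (m.filter (¬ j ≤ ·)).sum := Nat.le_add_right _ _
    _ = m.sum := by rw [← Multiset.sum_add, Multiset.filter_add_not]

lemma le_rowPart_iff (m : Multiset ℕ) {i j : ℕ} (hi : 1 ≤ i) (hj : 1 ≤ j) :
    j ≤ rowPart m i ↔ i ≤ conjPart m j := by
  constructor
  · intro h
    by_contra! hlt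
    have hsub : {k ∈ Icc 1 m.sum | i ≤ conjPart m k} ⊆ Icc 1 (j - 1) := fun k hk => by
      simp only [mem_filter, mem_Icc] at hk ⊢
      by_contra! hkj
      exact absurd (hk.2.trans (conjPart_antitone m (show j ≤ k by omega))) (by omega)
    have := card_le_card hsub
    rw [Nat.card_Icc] at this
    rw [rowPart] at h
    omega
  · intro h
    have hjS : j ≤ m.sum := by nlinarith [conjPart_mul_le_sum m j]
    have hsub : Icc 1 j ⊆ {k ∈ Icc 1 m.sum | i ≤ conjPart m k} := fun k hk => by
      simp only [mem_filter, mem_Icc] at hk ⊢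
      exact ⟨⟨hk.1, hk.2.trans hjS⟩, h.trans (conjPart_antitone m hk.2)⟩
    simpa [rowPart] using card_le_card hsub

lemma rowPart_eq_iff (m : Multiset ℕ) {i r : ℕ} (hi : 1 ≤ i) (hr : 1 ≤ r) :
    rowPart m i = r ↔ i ≤ conjPart m r ∧ conjPart m (r + 1) < i := by
  rw [← le_rowPart_iff m hi hr, ← not_le, ← le_rowPart_iff m hi (by omega)]
  omega

def hookCells (π : Multiset ℕ) (t : ℕ) : Finset (ℕ × ℕ) :=
  {c ∈ Icc 1 π.sum ×ˢ Icc 1 π.sum |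
    c.2 ≤ rowPart π c.1 ∧ rowPart π c.1 + conjPart π c.2 + 1 = t + c.1 + c.2}

lemma hookCount_eq_card_hookCells (π : Multiset ℕ) (t : ℕ) :
    hookCount π t = #(hookCells π t) := rfl

lemma mem_hookCells_two_iff {m : Multiset ℕ} (hm : m.Nodup) {i j : ℕ} :
    (i, j) ∈ hookCells m 2 ↔ 1 ≤ j ∧ j ∉ m ∧ j + 1 ∈ m ∧ i = conjPart m j := by
  have hcount := Multiset.nodup_iff_count_le_one.mp hm
  have hc₀ := conjPart_eq_conjPart_succ_add_count m j
  have hc₁ := conjPart_eq_conjPart_succ_add_count m (j + 1)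
  have := hcount j
  have := hcount (j + 1)
  simp only [hookCells, mem_filter, mem_product, mem_Icc, ← Multiset.count_pos]
  constructor
  · rintro ⟨⟨⟨hi, -⟩, hj, -⟩, hle, hhook⟩
    have hcj := (le_rowPart_iff m hi hj).mp hle
    have hrow : rowPart m i = j + 1 := by
      by_contra hrow
      have := ((rowPart_eq_iff m hi hj).mp (by omega)).2
      omega
    have := (rowPart_eq_iff m hi (by omega)).mp hrow
    omega
  · rintro ⟨hj, hjm, hjm', rfl⟩
    have hrow : rowPart m (conjPart m j) = j + 1 :=
      (rowPart_eq_iff m (by omega) (by omega)).mpr ⟨by omega, by omega⟩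
    have := conjPart_mul_le_sum m j
    have := Multiset.le_sum_of_mem (Multiset.count_pos.mp hjm')
    refine ⟨⟨⟨by omega, by nlinarith⟩, hj, by omega⟩, by omega, by omega⟩

def gapParts (A : Finset ℕ) : Finset ℕ := {p ∈ A | 2 ≤ p ∧ p - 1 ∉ A}

lemma hookCount_two_eq_card_gapParts {m : Multiset ℕ} (hm : m.Nodup) :
    hookCount m 2 = #(gapParts m.toFinset) := by
  rw [hookCount_eq_card_hookCells]
  refine card_nbij' (fun c => c.2 + 1) (fun p => (conjPart m (p - 1), p - 1)) ?_ ?_ ?_ ?_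
  · rintro ⟨i, j⟩ hc
    obtain ⟨hj, hjm, hjm', -⟩ := (mem_hookCells_two_iff hm).mp hc
    simp [gapParts, hjm, hjm', hj]
  · intro p hp
    simp only [gapParts, coe_filter, Set.mem_ofPred_eq, Multiset.mem_toFinset] at hp
    refine (mem_hookCells_two_iff hm).mpr ⟨by omega, hp.2.2, ?_, rfl⟩
    rw [Nat.sub_add_cancel (by omega)]
    exact hp.1
  · rintro ⟨i, j⟩ hc
    obtain ⟨-, -, -, rfl⟩ := (mem_hookCells_two_iff hm).mp hc
    simp
  · intro p hp
    simp only [gapParts, coe_filter, Set.mem_ofPred_eq] at hp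
    dsimp only
    omega

lemma gapParts_insert_succ {A : Finset ℕ} {N : ℕ} (hA : A ⊆ Icc 1 N) (hN : 1 ≤ N) :
    gapParts (insert (N + 1) A) = if N ∈ A then gapParts A else insert (N + 1) (gapParts A) := by
  have hle : ∀ a ∈ A, a ≤ N := fun a ha => (mem_Icc.mp (hA ha)).2
  ext p
  have := hle p
  have := hle (p - 1)
  split_ifs with hN <;> simp only [gapParts, mem_filter, mem_insert] <;> grind

lemma card_gapParts_insert_succ {A : Finset ℕ} {N : ℕ} (hA : A ⊆ Icc 1 N) (hN : 1 ≤ N) :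
    #(gapParts (insert (N + 1) A)) = #(gapParts A) + if N ∈ A then 0 else 1 := by
  rw [gapParts_insert_succ hA hN]
  split_ifs
  · rfl
  · refine card_insert_of_notMem fun h => ?_
    have := (mem_Icc.mp (hA (mem_filter.mp h).1)).2
    omega

section
variable {R : Type*} [CommSemiring R]

lemma sum_powerset_pow_sum (x : R) (s : Finset ℕ) :
    ∑ A ∈ s.powerset, x ^ (∑ a ∈ A, a) = ∏ k ∈ s, (1 + x ^ k) := by
  rw [prod_one_add]
  exact sum_congr rfl fun A _ => (prod_pow_eq_pow_sum A id x).symm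

def gapWeightSum (x : R) (N : ℕ) : R :=
  ∑ A ∈ (Icc 1 N).powerset, #(gapParts A) • x ^ (∑ a ∈ A, a)

lemma gapWeightSum_one (x : R) : gapWeightSum x 1 = 0 := by
  rw [gapWeightSum, Icc_self, ← insert_empty, sum_powerset_insert (notMem_empty 1)]
  simp [gapParts, filter_singleton]

lemma Icc_one_add_one_eq_insert (N : ℕ) : Icc 1 (N + 1) = insert (N + 1) (Icc 1 N) :=
  (insert_Icc_right_eq_Icc_add_one (by omega)).symm

lemma sum_powerset_Icc_of_notMem (x : R) (N : ℕ) :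
    ∑ A ∈ (Icc 1 (N + 1)).powerset, (if N + 1 ∈ A then 0 else x ^ (∑ a ∈ A, a)) =
      ∏ k ∈ Icc 1 N, (1 + x ^ k) := by
  rw [Icc_one_add_one_eq_insert, sum_powerset_insert (by simp), ← sum_powerset_pow_sum]
  simp only [mem_insert_self, if_true, sum_const_zero, add_zero]
  refine sum_congr rfl fun A hA => if_neg fun h => ?_
  simpa using mem_powerset.mp hA h

lemma gapWeightSum_add_two (x : R) (N : ℕ) :
    gapWeightSum x (N + 2) =
      (1 + x ^ (N + 2)) * gapWeightSum x (N + 1) + x ^ (N + 2) * ∏ k ∈ Icc 1 N, (1 + x ^ k) := by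
  have hsucc (A) (hA : A ∈ (Icc 1 (N + 1)).powerset) :
      #(gapParts (insert (N + 2) A)) • x ^ (∑ a ∈ insert (N + 2) A, a) =
        x ^ (N + 2) * (#(gapParts A) • x ^ (∑ a ∈ A, a)) +
          x ^ (N + 2) * (if N + 1 ∈ A then 0 else x ^ (∑ a ∈ A, a)) := by
    have hA := mem_powerset.mp hA
    rw [card_gapParts_insert_succ hA (by omega), sum_insert fun h => by simpa using hA h]
    split_ifs <;> simp [pow_add, add_smul] <;> ring
  rw [gapWeightSum, Icc_one_add_one_eq_insert, sum_powerset_insert (by simp), sum_congr rfl hsucc,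
    sum_add_distrib, ← mul_sum, ← mul_sum, sum_powerset_Icc_of_notMem, gapWeightSum]
  ring

lemma gapWeightSum_add_two_eq (x : R) (N : ℕ) :
    gapWeightSum x (N + 2) =
      x ^ 2 * (∑ i ∈ range (N + 1), x ^ i) * ∏ k ∈ Icc 2 (N + 1), (1 + x ^ k) := by
  induction N with
  | zero => simp [gapWeightSum_add_two, gapWeightSum_one]
  | succ N ih =>
    set g := ∑ i ∈ range (N + 1), x ^ i
    set Q := ∏ k ∈ Icc 2 (N + 1), (1 + x ^ k)
    have hg : ∑ i ∈ range (N + 2), x ^ i = g + x ^ (N + 1) := sum_range_succ _ _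
    have hg' : ∑ i ∈ range (N + 2), x ^ i = 1 + x * g := by
      rw [sum_range_succ', mul_sum]
      simp only [pow_succ', pow_zero, add_comm]
    have hQ : ∏ k ∈ Icc 2 (N + 1 + 1), (1 + x ^ k) = (1 + x ^ (N + 2)) * Q := by
      rw [← insert_Icc_right_eq_Icc_add_one (by omega), prod_insert (by simp)]
      rfl
    have hP : ∏ k ∈ Icc 1 (N + 1), (1 + x ^ k) = (1 + x) * Q := by
      rw [← insert_Icc_add_one_left_eq_Icc (by omega), prod_insert (by simp), pow_one]
      rfl
    rw [gapWeightSum_add_two, ih, hP, hQ]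
    calc (1 + x ^ (N + 1 + 2)) * (x ^ 2 * g * Q) + x ^ (N + 1 + 2) * ((1 + x) * Q)
        = x ^ 2 * Q * ((g + x ^ (N + 1)) + x ^ (N + 2) * (1 + x * g)) := by ring
      _ = x ^ 2 * (∑ i ∈ range (N + 2), x ^ i) * ((1 + x ^ (N + 2)) * Q) := by
        rw [← hg, ← hg']
        ring
end

open PowerSeries

lemma coeff_gapWeightSum {R : Type*} [CommSemiring R] (N n : ℕ) :
    coeff n (gapWeightSum (X : R⟦X⟧) N) =
      ((∑ A ∈ (Icc 1 N).powerset with ∑ a ∈ A, a = n, #(gapParts A) : ℕ) : R) := by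
  simp only [gapWeightSum, map_sum, map_nsmul, coeff_X_pow]
  simp [sum_filter, eq_comm]

lemma Nat.Partition.mem_distincts_iff {n : ℕ} {π : n.Partition} :
    π ∈ Nat.Partition.distincts n ↔ π.parts.Nodup := by
  simp [Nat.Partition.distincts]

lemma Nat.Partition.toFinset_val_parts {n : ℕ} {π : n.Partition} (hπ : π ∈ distincts n) :
    π.parts.toFinset.val = π.parts := by
  rw [Multiset.toFinset_val, Multiset.dedup_eq_self.mpr (mem_distincts_iff.mp hπ)]

lemma b2_eq_sum_card_gapParts {n N : ℕ} (hn : n ≤ N) :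
    b2 n = ∑ A ∈ (Icc 1 N).powerset with ∑ a ∈ A, a = n, #(gapParts A) := by
  rw [b2, sum_congr rfl fun π hπ =>
    hookCount_two_eq_card_gapParts (Nat.Partition.mem_distincts_iff.mp hπ)]
  have hmem {A : Finset ℕ} : A ∈ {A ∈ (Icc 1 N).powerset | ∑ a ∈ A, a = n} ↔
      (∀ a ∈ A, 1 ≤ a ∧ a ≤ N) ∧ ∑ a ∈ A, a = n := by
    simp [subset_iff]
  refine sum_bij' (fun π _ => π.parts.toFinset)
    (fun A hA => ⟨A.val, fun hi => (hmem.mp hA).1 _ hi |>.1, by simpa using (hmem.mp hA).2⟩)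
    (fun π hπ => hmem.mpr ⟨fun a ha => ?_, ?_⟩)
    (fun A _ => Nat.Partition.mem_distincts_iff.mpr A.nodup)
    (fun π hπ => Nat.Partition.ext (Nat.Partition.toFinset_val_parts hπ))
    (fun A _ => val_toFinset A) (fun _ _ => rfl)
  · have := π.le_of_mem_parts (Multiset.mem_toFinset.mp ha)
    have := π.parts_pos (Multiset.mem_toFinset.mp ha)
    omega
  · rw [sum_eq_multiset_sum, Nat.Partition.toFinset_val_parts hπ, Multiset.map_id', π.parts_sum]

lemma coeff_mul_eq_of_coeff_eq {R : Type*} [Semiring R] {f f' g g' : R⟦X⟧} {n : ℕ}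
    (hf : ∀ m ≤ n, coeff m f = coeff m f') (hg : ∀ m ≤ n, coeff m g = coeff m g') :
    coeff n (f * g) = coeff n (f' * g') := by
  rw [coeff_mul, coeff_mul]
  refine sum_congr rfl fun p hp => ?_
  rw [hf _ (HasAntidiagonal.antidiagonal.fst_le hp),
    hg _ (HasAntidiagonal.antidiagonal.snd_le hp)]

lemma coeff_prod_Icc_one_add_X_pow {R : Type*} [CommSemiring R] (a : ℕ) {m M : ℕ} (hm : m ≤ M) :
    coeff m (∏ k ∈ Icc a M, (1 + X ^ k) : R⟦X⟧) = coeff m (∏ k ∈ Icc a m, (1 + X ^ k) : R⟦X⟧) := by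
  induction M, hm using Nat.le_induction with
  | base => rfl
  | succ M hM ih =>
    rcases le_or_gt a (M + 1) with ha | ha
    · rw [← insert_Icc_right_eq_Icc_add_one ha, prod_insert (by simp), add_mul, one_mul, map_add,
        coeff_X_pow_mul', if_neg (by omega), add_zero, ih]
    · rw [Icc_eq_empty (by omega), Icc_eq_empty (by omega)]

lemma coeff_prodOnePlusFrom (a : ℕ) {m N : ℕ} (hm : m ≤ N) :
    coeff m (prodOnePlusFrom a) = coeff m (∏ k ∈ Icc a N, (1 + X ^ k) : ℚ⟦X⟧) := by
  rw [prodOnePlusFrom, coeff_mk, coeff_prod_Icc_one_add_X_pow a (by omega : m ≤ a + m),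
    coeff_prod_Icc_one_add_X_pow a hm]

lemma inv_one_sub_X_eq_mk_one {k : Type*} [Field k] : (1 - X : k⟦X⟧)⁻¹ = PowerSeries.mk 1 :=
  (PowerSeries.inv_eq_iff_mul_eq_one (by simp)).mpr (mk_one_mul_one_sub_eq_one k)

lemma coeff_sum_range_X_pow {R : Type*} [Semiring R] {m N : ℕ} (hm : m < N) :
    coeff m (∑ i ∈ range N, X ^ i : R⟦X⟧) = 1 := by
  simp [coeff_X_pow, hm]

open PowerSeries in
theorem b2_gen_fun :
    PowerSeries.mk (fun n => (b2 n : ℚ)) =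
      (X : ℚ⟦X⟧) ^ 2 * (1 - (X : ℚ⟦X⟧))⁻¹ * prodOnePlusFrom 2 := by
  ext n
  rw [coeff_mk, b2_eq_sum_card_gapParts (N := n + 2) (by omega), ← coeff_gapWeightSum,
    gapWeightSum_add_two_eq]
  refine coeff_mul_eq_of_coeff_eq (fun m hm => coeff_mul_eq_of_coeff_eq (fun _ _ => rfl) ?_) ?_
  · intro k hk
    rw [inv_one_sub_X_eq_mk_one, coeff_mk, coeff_sum_range_X_pow (by omega), Pi.one_apply]
  · intro m hm
    rw [coeff_prodOnePlusFrom 2 (by omega : m ≤ n + 1)]
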